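/- arXiv:1807.11648 — 2 statements merged into one kernel-verified Lean document; each statement's English description precedes it below -/
import Mathlib

section
/- Let V ⊆ ℝ^d be a finite set of vectors, let 1 ≤ k ≤ d be an integer, and let x : V → [0,∞) be weights with Σ_{v∈V} x(v) = k. Then there exist vectors w_1, …, w_k ∈ V (not necessarily distinct) such that det_k( Σ_{i=1}^{k} w_i w_iᵀ ) ≥ e^{−k} · det_k( Σ_{v∈V} x(v) v vᵀ ). -/
/-!
STATEMENT 13: Let V ⊆ ℝ^d be finite, 1 ≤ k ≤ d, and x : V → [0,∞) with
Σ_{v∈V} x(v) = k. Then there exist vectors w_1, …, w_k ∈ V (not necessarily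
distinct) with det_k( Σ_{i=1}^{k} w_i w_iᵀ ) ≥ e^{−k} · det_k( Σ_{v∈V} x(v) v vᵀ ).
-/

open Matrix Finset

noncomputable section

/-- The outer product `v vᵀ` as a `d × d` real matrix. -/
def outer {d : ℕ} (v : Fin d → ℝ) : Matrix (Fin d) (Fin d) ℝ := Matrix.vecMulVec v v

/-- `detk k A` is the sum of all `k × k` principal minors of `A`. -/
def detk {d : ℕ} (k : ℕ) (A : Matrix (Fin d) (Fin d) ℝ) : ℝ :=
  ∑ S ∈ Finset.powersetCard k (Finset.univ : Finset (Fin d)),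
    Matrix.det (A.submatrix (fun i : {x // x ∈ S} => (i : Fin d))
      (fun j : {x // x ∈ S} => (j : Fin d)))

/-!
Expanding every principal minor of `∑ v ∈ V, x v • outer v` by multilinearity in its rows, and
discarding the terms with a repeated row, gives a Cauchy–Binet formula: the fractional `detk` is
`∑ (∏ v ∈ T, x v) * detk k (∑ v ∈ T, outer v)` over the `k`-subsets `T` of `V`. Each `detk` on the
right is at most that of the best `k`-tuple from `V`, and the weights sum to the elementary
symmetric polynomial `e_k(x) ≤ ∏ (1 + x v) ≤ exp (∑ v, x v) = e^k`.
-/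

open Fintype

theorem Matrix.det_of_sum_smul {R ι β : Type*} [CommRing R] [Fintype ι] [DecidableEq ι]
    (W : Finset β) (a : ι → β → R) (u : β → ι → R) :
    (of fun i => ∑ v ∈ W, a i v • u v).det
      = ∑ r ∈ piFinset fun _ => W, (∏ i, a i (r i)) * (of fun i => u (r i)).det := by
  change (detRowAlternating : (ι → R) [⋀^ι]→ₗ[R] R).toMultilinearMap
    (fun i => ∑ v ∈ W, a i v • u v) = _
  rw [MultilinearMap.map_sum_finset]
  exact sum_congr rfl fun r _ => MultilinearMap.map_smul_univ _ _ _

theorem Matrix.det_of_comp_eq_zero_of_not_injective {R ι β : Type*} [CommRing R] [Fintype ι]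
    [DecidableEq ι] (u : β → ι → R) {r : ι → β} (hr : ¬ Function.Injective r) :
    (of fun i => u (r i)).det = 0 := by
  obtain ⟨i, j, hij, hne⟩ := Function.not_injective_iff.mp hr
  exact det_zero_of_row_eq hne (congrArg u hij)

theorem Finset.image_univ_eq_of_injective {α β : Type*} [Fintype α] [DecidableEq β]
    {T : Finset β} (hT : #T = Fintype.card α) {r : α → β} (hr : Function.Injective r)
    (hrT : ∀ i, r i ∈ T) : univ.image r = T :=
  eq_of_subset_of_card_le (by simpa [subset_iff] using hrT)
    (by rw [card_image_of_injective _ hr, card_univ, hT])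

theorem Finset.sum_piFinset_eq_sum_powersetCard {α β M : Type*} [Fintype α] [DecidableEq α]
    [DecidableEq β] [AddCommMonoid M] (W : Finset β) {F : (α → β) → M}
    (hF : ∀ r, ¬ Function.Injective r → F r = 0) :
    ∑ r ∈ piFinset fun _ => W, F r
      = ∑ T ∈ W.powersetCard (Fintype.card α), ∑ r ∈ piFinset fun _ => T, F r := by
  classical
  rw [← sum_filter_of_ne fun r _ hFr => by_contra fun hr => hFr (hF r hr),
    ← sum_fiberwise_of_maps_to (g := fun r => univ.image r) (t := W.powersetCard _)]
  · refine sum_congr rfl fun T hT => ?_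
    obtain ⟨hTW, hTcard⟩ := mem_powersetCard.mp hT
    rw [← sum_filter_of_ne (s := piFinset fun _ => T) fun r _ hFr =>
      by_contra fun hr => hFr (hF r hr)]
    refine sum_congr (ext fun r => ?_) fun _ _ => rfl
    simp only [mem_filter, mem_piFinset]
    constructor
    · rintro ⟨⟨-, hinj⟩, rfl⟩
      exact ⟨fun i => mem_image_of_mem r (mem_univ i), hinj⟩
    · rintro ⟨hrT, hinj⟩
      exact ⟨⟨fun i => hTW (hrT i), hinj⟩, image_univ_eq_of_injective hTcard hinj hrT⟩
  · intro r hr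
    obtain ⟨hrW, hinj⟩ := mem_filter.mp hr
    rw [mem_powersetCard, card_image_of_injective _ hinj, card_univ]
    exact ⟨by simpa [subset_iff] using mem_piFinset.mp hrW, rfl⟩

theorem Finset.sum_piFinset_prod_mul {α β R : Type*} [Fintype α] [DecidableEq α]
    [CommSemiring R] {T : Finset β} (hT : #T = Fintype.card α) (c : β → R)
    {G : (α → β) → R} (hG : ∀ r, ¬ Function.Injective r → G r = 0) :
    ∑ r ∈ piFinset fun _ => T, (∏ i, c (r i)) * G r
      = (∏ v ∈ T, c v) * ∑ r ∈ piFinset fun _ => T, G r := by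
  classical
  rw [mul_sum]
  refine sum_congr rfl fun r hr => ?_
  by_cases hinj : Function.Injective r
  · rw [← image_univ_eq_of_injective hT hinj (mem_piFinset.mp hr),
      prod_image fun _ _ _ _ h => hinj h]
  · rw [hG r hinj, mul_zero, mul_zero]

theorem Real.sum_powersetCard_prod_le_exp_sum {ι : Type*} (s : Finset ι) {f : ι → ℝ}
    (hf : ∀ i ∈ s, 0 ≤ f i) (k : ℕ) :
    ∑ t ∈ s.powersetCard k, ∏ i ∈ t, f i ≤ exp (∑ i ∈ s, f i) :=
  calc ∑ t ∈ s.powersetCard k, ∏ i ∈ t, f i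
      ≤ ∑ t ∈ s.powerset, ∏ i ∈ t, f i :=
        sum_le_sum_of_subset_of_nonneg (fun t ht => mem_powerset.mpr (mem_powersetCard.mp ht).1)
          fun t ht _ => prod_nonneg fun i hi => hf i (mem_powerset.mp ht hi)
    _ = ∏ i ∈ s, (f i + 1) := (prod_add_one s).symm
    _ ≤ ∏ i ∈ s, exp (f i) :=
        prod_le_prod (fun i hi => by linarith [hf i hi]) fun i _ => by
          linarith [add_one_le_exp (f i)]
    _ = exp (∑ i ∈ s, f i) := (exp_sum s f).symm

section PrincipalMinors

variable {d : ℕ}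

def principalMinor (S : Finset (Fin d)) (A : Matrix (Fin d) (Fin d) ℝ) : ℝ :=
  (A.submatrix (fun i : S => (i : Fin d)) (fun j : S => (j : Fin d))).det

theorem detk_eq_sum_principalMinor (k : ℕ) (A : Matrix (Fin d) (Fin d) ℝ) :
    detk k A = ∑ S ∈ powersetCard k univ, principalMinor S A :=
  rfl

theorem posSemidef_outer (v : Fin d → ℝ) : (outer v).PosSemidef := by
  simpa [outer] using posSemidef_vecMulVec_star_self v

theorem detk_sum_outer_nonneg {ι : Type*} (k : ℕ) (s : Finset ι) (w : ι → Fin d → ℝ) :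
    0 ≤ detk k (∑ i ∈ s, outer (w i)) :=
  sum_nonneg fun _ _ =>
    ((posSemidef_sum s fun i _ => posSemidef_outer (w i)).submatrix _).det_nonneg

theorem principalMinor_sum_smul_outer (S : Finset (Fin d)) (W : Finset (Fin d → ℝ))
    (c : (Fin d → ℝ) → ℝ) :
    principalMinor S (∑ v ∈ W, c v • outer v)
      = ∑ r ∈ piFinset fun _ : S => W, (∏ i, c (r i))
          * ((∏ i, r i i) * (of fun i j : S => r i j).det) := by
  have hrows : (∑ v ∈ W, c v • outer v).submatrix (fun i : S => (i : Fin d)) (fun j : S => j)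
      = of fun i : S => ∑ v ∈ W, (c v * v i) • fun j : S => v j := by
    ext i j
    simp [outer, Matrix.sum_apply, vecMulVec_apply, mul_assoc]
  rw [principalMinor, hrows, det_of_sum_smul]
  simp only [prod_mul_distrib, mul_assoc]

theorem principalMinor_sum_smul_outer_eq_sum_powersetCard (S : Finset (Fin d))
    (V : Finset (Fin d → ℝ)) (x : (Fin d → ℝ) → ℝ) :
    principalMinor S (∑ v ∈ V, x v • outer v)
      = ∑ T ∈ V.powersetCard #S, (∏ v ∈ T, x v) * principalMinor S (∑ v ∈ T, outer v) := by
  have hG : ∀ r : S → (Fin d → ℝ), ¬ Function.Injective r →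
      (∏ i, r i i) * (of fun i j : S => r i j).det = 0 := fun r hr => by
    rw [det_of_comp_eq_zero_of_not_injective (fun v (j : S) => v j) hr, mul_zero]
  rw [principalMinor_sum_smul_outer, sum_piFinset_eq_sum_powersetCard V fun r hr => by
    rw [hG r hr, mul_zero], card_coe]
  refine sum_congr rfl fun T hT => ?_
  rw [sum_piFinset_prod_mul ((mem_powersetCard.mp hT).2.trans (card_coe S).symm) x hG]
  congr 1
  simpa using (principalMinor_sum_smul_outer S T fun _ => 1).symm

theorem detk_sum_smul_outer (k : ℕ) (V : Finset (Fin d → ℝ)) (x : (Fin d → ℝ) → ℝ) :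
    detk k (∑ v ∈ V, x v • outer v)
      = ∑ T ∈ V.powersetCard k, (∏ v ∈ T, x v) * detk k (∑ v ∈ T, outer v) := by
  simp only [detk_eq_sum_principalMinor, mul_sum]
  rw [sum_comm]
  refine sum_congr rfl fun S hS => ?_
  rw [principalMinor_sum_smul_outer_eq_sum_powersetCard, (mem_powersetCard.mp hS).2]

theorem detk_sum_smul_outer_le_exp_mul {k : ℕ} {V : Finset (Fin d → ℝ)}
    {x : (Fin d → ℝ) → ℝ} (hx : ∀ v ∈ V, 0 ≤ x v) {M : ℝ} (hM0 : 0 ≤ M)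
    (hM : ∀ T ∈ V.powersetCard k, detk k (∑ v ∈ T, outer v) ≤ M) :
    detk k (∑ v ∈ V, x v • outer v) ≤ Real.exp (∑ v ∈ V, x v) * M :=
  calc detk k (∑ v ∈ V, x v • outer v)
      = ∑ T ∈ V.powersetCard k, (∏ v ∈ T, x v) * detk k (∑ v ∈ T, outer v) :=
        detk_sum_smul_outer k V x
    _ ≤ ∑ T ∈ V.powersetCard k, (∏ v ∈ T, x v) * M :=
        sum_le_sum fun T hT => mul_le_mul_of_nonneg_left (hM T hT)
          (prod_nonneg fun v hv => hx v ((mem_powersetCard.mp hT).1 hv))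
    _ = (∑ T ∈ V.powersetCard k, ∏ v ∈ T, x v) * M := (sum_mul ..).symm
    _ ≤ Real.exp (∑ v ∈ V, x v) * M :=
        mul_le_mul_of_nonneg_right (Real.sum_powersetCard_prod_le_exp_sum V hx k) hM0

end PrincipalMinors

theorem fractional_detk_rounding_general
    {d : ℕ} (k : ℕ)
    (V : Finset (Fin d → ℝ)) (x : (Fin d → ℝ) → ℝ) (hx : ∀ v, 0 ≤ x v)
    (hsum : ∑ v ∈ V, x v = k) :
    ∃ w : Fin k → (Fin d → ℝ), (∀ i, w i ∈ V) ∧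
      Real.exp (-(k:ℝ)) * detk k (∑ v ∈ V, x v • outer v) ≤
        detk k (∑ i, outer (w i)) := by
  have hV : ∀ _ : Fin k, V.Nonempty := fun i => nonempty_iff_ne_empty.mpr fun hempty => by
    have hk : (k : ℝ) = 0 := by rw [← hsum, hempty, Finset.sum_empty]
    exact i.pos.ne' (by exact_mod_cast hk)
  obtain ⟨w, hwV, hw⟩ := exists_max_image (piFinset fun _ : Fin k => V)
    (fun w => detk k (∑ i, outer (w i))) (piFinset_nonempty.mpr hV)
  refine ⟨w, mem_piFinset.mp hwV, ?_⟩
  have hT : ∀ T ∈ V.powersetCard k, detk k (∑ v ∈ T, outer v) ≤ detk k (∑ i, outer (w i)) := by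
    intro T hT
    obtain ⟨hTV, hTk⟩ := mem_powersetCard.mp hT
    let e := T.equivFinOfCardEq hTk
    have := hw (fun i => e.symm i) (mem_piFinset.mpr fun i => hTV (e.symm i).2)
    rwa [e.symm.sum_comp (fun v : T => outer (v : Fin d → ℝ)), sum_coe_sort] at this
  rw [Real.exp_neg, inv_mul_le_iff₀ (Real.exp_pos _), ← hsum]
  exact detk_sum_smul_outer_le_exp_mul (fun v _ => hx v) (detk_sum_outer_nonneg k univ w) hT

theorem fractional_detk_rounding
    {d : ℕ} (k : ℕ) (hk1 : 1 ≤ k) (hkd : k ≤ d)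
    (V : Finset (Fin d → ℝ)) (x : (Fin d → ℝ) → ℝ) (hx : ∀ v, 0 ≤ x v)
    (hsum : ∑ v ∈ V, x v = k) :
    ∃ w : Fin k → (Fin d → ℝ), (∀ i, w i ∈ V) ∧
      Real.exp (-(k:ℝ)) * detk k (∑ v ∈ V, x v • outer v) ≤
        detk k (∑ i, outer (w i)) :=
  fractional_detk_rounding_general k V x hx hsum
end
end

section
/- Let 1 ≤ k ≤ d be integers, let A, B ∈ ℝ^{d×d} be positive semidefinite matrices, and let v ∈ ℝ^d satisfy v vᵀ ⪯_k B. Then det_k(A + v vᵀ) ≤ det_k(A + B). In particular, the map A ↦ −det_k(A)^{1/k} is vector k-monotone. -/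
/-!
STATEMENT 14: Let 1 ≤ k ≤ d, A, B PSD, and v ∈ ℝ^d with v vᵀ ⪯_k B. Then
det_k(A + v vᵀ) ≤ det_k(A + B). In particular, A ↦ −det_k(A)^{1/k} is vector
k-monotone.
-/

open Matrix Finset

noncomputable section

/-- The Frobenius (trace) inner product of two real matrices. -/
def frob {d : ℕ} (A B : Matrix (Fin d) (Fin d) ℝ) : ℝ := ∑ i, ∑ j, A i j * B i j

/-- `A ⪯_k B` : `⟨A, Π⟩ ≤ ⟨B, Π⟩` for every orthogonal projection matrix `Π`
(symmetric and idempotent) of rank `d - k + 1`. -/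
def PrecK {d : ℕ} (k : ℕ) (A B : Matrix (Fin d) (Fin d) ℝ) : Prop :=
  ∀ P : Matrix (Fin d) (Fin d) ℝ, P.IsHermitian → P * P = P → P.rank = d - k + 1 →
    frob A P ≤ frob B P

/-- `f` is vector `k`-monotone: for PSD `A`, `B` and `v` with `v vᵀ ⪯_k B`,
`f(A + v vᵀ) ≥ f(A + B)`. -/
def VectorKMonotone {d : ℕ} (k : ℕ) (f : Matrix (Fin d) (Fin d) ℝ → ℝ) : Prop :=
  ∀ A B : Matrix (Fin d) (Fin d) ℝ, A.PosSemidef → B.PosSemidef →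
    ∀ v : Fin d → ℝ, PrecK k (outer v) B → f (A + B) ≤ f (A + outer v)


/-!
Conjugating by an orthogonal eigenbasis of `A` leaves `detk` unchanged and makes `A = diagonal λ`
with `λ ≥ 0`. For diagonal `λ` the coefficient of `X ^ k` in `det (1 + X • (diagonal λ + M))` gives
`detk k (diagonal λ + M) = ∑_W e_{k - |W|}(λ off W) · det M_W`. The `W = ∅` term does not involve
`M`; the terms with `|W| ≥ 2` vanish for the rank-one `M = w wᵀ` and are nonnegative for positive
semidefinite `M`; and the terms with `|W| = 1` regroup as `∑_{|S| = k - 1} λ^S ∑_{i ∉ S} M i i`,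
where `v vᵀ ⪯_k B`, tested against the projection onto the eigenvectors outside `S` (of rank
`d - k + 1`), compares the inner sums. The second claim follows as `x ↦ x ^ (1 / k)` is monotone
on `[0, ∞)`.
-/

namespace Matrix

variable {n R : Type*} [DecidableEq n] [CommRing R]

def principalMinor (M : Matrix n n R) (s : Finset n) : R :=
  (M.submatrix ((↑) : s → n) (↑)).det

lemma principalMinor_empty (M : Matrix n n R) : M.principalMinor ∅ = 1 :=
  det_isEmpty

lemma principalMinor_singleton (M : Matrix n n R) (i : n) : M.principalMinor {i} = M i i :=
  det_unique _

lemma principalMinor_smul (c : R) (M : Matrix n n R) (s : Finset n) :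
    (c • M).principalMinor s = c ^ #s * M.principalMinor s := by
  rw [principalMinor, principalMinor, ← Fintype.card_coe s, ← det_smul]
  rfl

lemma principalMinor_map {S : Type*} [CommRing S] (φ : R →+* S) (M : Matrix n n R)
    (s : Finset n) : (M.map φ).principalMinor s = φ (M.principalMinor s) :=
  (φ.map_det _).symm

lemma principalMinor_vecMulVec (u v : n → R) {s : Finset n} (hs : 2 ≤ #s) :
    (vecMulVec u v).principalMinor s = 0 := by
  have : Nontrivial s := Fintype.one_lt_card_iff_nontrivial.mp (by rw [Fintype.card_coe]; omega)
  exact det_vecMulVec (u ∘ ((↑) : s → n)) (v ∘ (↑))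

lemma PosSemidef.principalMinor_nonneg {M : Matrix n n ℝ} (hM : M.PosSemidef) (s : Finset n) :
    0 ≤ M.principalMinor s :=
  (hM.submatrix _).det_nonneg

lemma det_piecewise_diagonal [Fintype n] (f : n → R) (M : Matrix n n R) (s : Finset n) :
    det (of (s.piecewise M (diagonal f))) = (∏ i ∈ sᶜ, f i) * M.principalMinor s := by
  have hfactor : of (s.piecewise M (diagonal f)) = diagonal (fun i => if i ∈ s then 1 else f i) *
      of (s.piecewise M.row (1 : Matrix n n R).row) := by
    ext i j
    by_cases hi : i ∈ s <;> simp [hi, Finset.piecewise, diagonal_apply, one_apply, row]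
  rw [hfactor, det_mul, det_diagonal, det_piecewise_one_eq_submatrix_det, principalMinor,
    prod_ite, prod_const_one, one_mul, filter_not, filter_mem_eq_inter, univ_inter,
    compl_eq_univ_sdiff]

lemma det_diagonal_add [Fintype n] (f : n → R) (M : Matrix n n R) :
    det (diagonal f + M) = ∑ s : Finset n, (∏ i ∈ sᶜ, f i) * M.principalMinor s := by
  rw [add_comm, ← sum_congr rfl fun s _ => det_piecewise_diagonal f M s]
  exact (detRowAlternating : (n → R) [⋀^n]→ₗ[R] R).map_add_univ M (diagonal f)

open Polynomial in
lemma sum_principalMinor_diagonal_add [Fintype n] (f : n → R) (M : Matrix n n R) (k : ℕ) :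
    ∑ t ∈ univ.powersetCard k, (diagonal f + M).principalMinor t =
      ∑ s : Finset n, (∑ t ∈ sᶜ.powerset with #t + #s = k, ∏ i ∈ t, f i) *
        M.principalMinor s := by
  have hlin : 1 + (X : R[X]) • (diagonal f + M).map C =
      diagonal (fun i => (1 : R[X]) + C (f i) * X) + (X : R[X]) • M.map C := by
    refine Matrix.ext fun i j => ?_
    simp only [add_apply, smul_apply, map_apply, diagonal_apply, one_apply, smul_eq_mul]
    split_ifs <;> simp only [map_add, zero_add]
    ring
  simp only [principalMinor]
  rw [← coeff_det_one_add_X_smul_eq_sum_minors, hlin, det_diagonal_add]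
  simp only [principalMinor_smul, principalMinor_map, prod_one_add, prod_mul_distrib,
    prod_const, ← map_prod, finsetSum_coeff]
  refine sum_congr rfl fun s _ => ?_
  rw [sum_mul, sum_mul, finsetSum_coeff, sum_filter]
  refine sum_congr rfl fun t _ => ?_
  rw [show C (∏ i ∈ t, f i) * X ^ #t * (X ^ #s * C (M.principalMinor s)) =
      C ((∏ i ∈ t, f i) * M.principalMinor s) * X ^ (#t + #s) by rw [map_mul]; ring,
    coeff_C_mul_X_pow, principalMinor]
  simp only [eq_comm]

end Matrix

lemma Finset.sum_finset_eq_empty_add_singletons_add {n M : Type*} [Fintype n] [DecidableEq n]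
    [AddCommMonoid M] (g : Finset n → M) :
    ∑ s, g s = g ∅ + ∑ i, g {i} + ∑ s with 2 ≤ #s, g s := by
  have hsmall : ({s | #s ≤ 1} : Finset (Finset n)) =
      insert ∅ (univ.map ⟨({·}), singleton_injective⟩) := by
    ext s
    simp [Nat.le_one_iff_eq_zero_or_eq_one, card_eq_one, eq_comm]
  rw [← sum_filter_add_sum_filter_not univ (fun s => #s ≤ 1), hsmall, sum_insert (by simp),
    sum_map]
  congr 1
  exact sum_congr (by ext s; simp; omega) fun _ _ => rfl

lemma Finset.sum_powerset_compl_singleton_mul_comm {n R : Type*} [Fintype n]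
    [DecidableEq n] [CommSemiring R] (f x : n → R) (k : ℕ) :
    ∑ i, (∑ t ∈ ({i}ᶜ : Finset n).powerset with #t + 1 = k, ∏ j ∈ t, f j) * x i =
      ∑ t with #t + 1 = k, (∏ j ∈ t, f j) * ∑ i ∈ tᶜ, x i := by
  simp only [sum_mul, mul_sum]
  exact sum_comm' fun i t => by simp [subset_compl_singleton]

namespace Matrix

variable {n : Type*} [Fintype n] [DecidableEq n]

theorem sum_principalMinor_diagonal_add_vecMulVec_le {f : n → ℝ} (hf : ∀ i, 0 ≤ f i)
    {M : Matrix n n ℝ} (hM : M.PosSemidef) {w : n → ℝ} {k : ℕ}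
    (h : ∀ s : Finset n, #s + 1 = k → ∑ i ∈ sᶜ, w i * w i ≤ ∑ i ∈ sᶜ, M i i) :
    ∑ t ∈ univ.powersetCard k, (diagonal f + vecMulVec w w).principalMinor t ≤
      ∑ t ∈ univ.powersetCard k, (diagonal f + M).principalMinor t := by
  have hcoeff (s : Finset n) : 0 ≤ ∑ t ∈ sᶜ.powerset with #t + #s = k, ∏ i ∈ t, f i :=
    sum_nonneg fun t _ => prod_nonneg fun i _ => hf i
  rw [sum_principalMinor_diagonal_add, sum_principalMinor_diagonal_add,
    sum_finset_eq_empty_add_singletons_add, sum_finset_eq_empty_add_singletons_add]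
  simp only [principalMinor_empty, principalMinor_singleton, card_singleton, vecMulVec_apply]
  have hfirst : ∑ i, (∑ t ∈ ({i}ᶜ : Finset n).powerset with #t + 1 = k, ∏ j ∈ t, f j) *
        (w i * w i) ≤
      ∑ i, (∑ t ∈ ({i}ᶜ : Finset n).powerset with #t + 1 = k, ∏ j ∈ t, f j) * M i i := by
    rw [sum_powerset_compl_singleton_mul_comm, sum_powerset_compl_singleton_mul_comm]
    exact sum_le_sum fun t ht =>
      mul_le_mul_of_nonneg_left (h t (mem_filter.mp ht).2) (prod_nonneg fun i _ => hf i)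
  have hrank_one : ∑ s with 2 ≤ #s, (∑ t ∈ sᶜ.powerset with #t + #s = k, ∏ i ∈ t, f i) *
      (vecMulVec w w).principalMinor s = 0 :=
    sum_eq_zero fun s hs => by rw [principalMinor_vecMulVec _ _ (mem_filter.mp hs).2, mul_zero]
  have hpsd : 0 ≤ ∑ s with 2 ≤ #s, (∑ t ∈ sᶜ.powerset with #t + #s = k, ∏ i ∈ t, f i) *
      M.principalMinor s :=
    sum_nonneg fun s _ => mul_nonneg (hcoeff s) (hM.principalMinor_nonneg s)
  linarith

lemma IsHermitian.star_eigenvectorUnitary_mul_mul {A : Matrix n n ℝ} (hA : A.IsHermitian) :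
    star (hA.eigenvectorUnitary : Matrix n n ℝ) * A * hA.eigenvectorUnitary =
      diagonal hA.eigenvalues := by
  simpa [Unitary.conjStarAlgAut_star_apply] using hA.conjStarAlgAut_star_eigenvectorUnitary

end Matrix

lemma detk_eq_sum_principalMinor_s14 {d : ℕ} (k : ℕ) (M : Matrix (Fin d) (Fin d) ℝ) :
    detk k M = ∑ t ∈ univ.powersetCard k, M.principalMinor t :=
  rfl

open Polynomial in
lemma detk_mul_comm {d : ℕ} (k : ℕ) (M N : Matrix (Fin d) (Fin d) ℝ) :
    detk k (M * N) = detk k (N * M) := by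
  rw [detk, detk, ← coeff_det_one_add_X_smul_eq_sum_minors,
    ← coeff_det_one_add_X_smul_eq_sum_minors, Matrix.map_mul, Matrix.map_mul, ← smul_mul,
    det_one_add_mul_comm, Matrix.mul_smul]

lemma detk_star_mul_mul {d : ℕ} (k : ℕ) {U : Matrix (Fin d) (Fin d) ℝ}
    (hU : U ∈ unitaryGroup (Fin d) ℝ) (M : Matrix (Fin d) (Fin d) ℝ) :
    detk k (star U * M * U) = detk k M := by
  rw [detk_mul_comm, ← Matrix.mul_assoc, mem_unitaryGroup_iff.mp hU, Matrix.one_mul]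

lemma detk_nonneg {d : ℕ} (k : ℕ) {M : Matrix (Fin d) (Fin d) ℝ} (hM : M.PosSemidef) :
    0 ≤ detk k M :=
  sum_nonneg fun s _ => hM.principalMinor_nonneg s

lemma outer_posSemidef {d : ℕ} (v : Fin d → ℝ) : (outer v).PosSemidef := by
  simpa [outer] using posSemidef_vecMulVec_self_star v

lemma star_mul_outer_mul {d : ℕ} (U : Matrix (Fin d) (Fin d) ℝ) (v : Fin d → ℝ) :
    star U * outer v * U = vecMulVec (v ᵥ* U) (v ᵥ* U) := by
  rw [outer, mul_vecMulVec, vecMulVec_mul, star_eq_conjTranspose,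
    conjTranspose_eq_transpose_of_trivial, mulVec_transpose]

lemma frob_eq_trace_mul_transpose {d : ℕ} (X P : Matrix (Fin d) (Fin d) ℝ) :
    frob X P = trace (X * Pᵀ) := by
  simp [frob, trace, mul_apply]

/-- `PrecK` tested against the projection onto the span of the columns `i ∈ s` of `U`. -/
lemma PrecK.sum_diag_star_mul_mul_le {d k : ℕ} {X Y U : Matrix (Fin d) (Fin d) ℝ}
    (h : PrecK k X Y) (hU : U ∈ unitaryGroup (Fin d) ℝ) {s : Finset (Fin d)}
    (hs : #s = d - k + 1) :
    ∑ i ∈ s, (star U * X * U) i i ≤ ∑ i ∈ s, (star U * Y * U) i i := by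
  set g : Fin d → ℝ := fun i => if i ∈ s then 1 else 0
  set P := U * diagonal g * star U
  have hP_herm : P.IsHermitian := isHermitian_mul_mul_conjTranspose _ (isHermitian_diagonal _)
  have hP_idem : P * P = P := by
    have hg : diagonal g * diagonal g = diagonal g := by
      rw [diagonal_mul_diagonal]
      congr 1
      ext i
      by_cases hi : i ∈ s <;> simp [g, hi]
    calc P * P = U * (diagonal g * (star U * U) * diagonal g) * star U := by
          simp only [P, Matrix.mul_assoc]
      _ = P := by rw [mem_unitaryGroup_iff'.mp hU, Matrix.mul_one, hg]
  have hP_rank : P.rank = #s := by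
    rw [rank_mul_eq_left_of_isUnit_det _ _ (UnitaryGroup.det_isUnit ⟨_, Unitary.star_mem hU⟩),
      rank_mul_eq_right_of_isUnit_det _ _ (UnitaryGroup.det_isUnit ⟨U, hU⟩), rank_diagonal]
    simp [g, Fintype.card_subtype]
  have hfrob (Z : Matrix (Fin d) (Fin d) ℝ) : frob Z P = ∑ i ∈ s, (star U * Z * U) i i := by
    rw [frob_eq_trace_mul_transpose, ← conjTranspose_eq_transpose_of_trivial, hP_herm.eq,
      show Z * P = Z * U * diagonal g * star U by simp only [P, Matrix.mul_assoc],
      trace_mul_comm, ← Matrix.mul_assoc, ← Matrix.mul_assoc]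
    simp [trace, g]
  simpa only [hfrob] using h P hP_herm hP_idem (hP_rank.trans hs)

theorem detk_add_outer_le {d k : ℕ} (hkd : k ≤ d) {A B : Matrix (Fin d) (Fin d) ℝ}
    (hA : A.PosSemidef) (hB : B.PosSemidef) {v : Fin d → ℝ} (hvB : PrecK k (outer v) B) :
    detk k (A + outer v) ≤ detk k (A + B) := by
  set U : Matrix (Fin d) (Fin d) ℝ := hA.isHermitian.eigenvectorUnitary.1
  have hU : U ∈ unitaryGroup (Fin d) ℝ := hA.isHermitian.eigenvectorUnitary.2
  rw [← detk_star_mul_mul k hU, ← detk_star_mul_mul k hU (A + B), Matrix.mul_add, Matrix.add_mul,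
    Matrix.mul_add, Matrix.add_mul, hA.isHermitian.star_eigenvectorUnitary_mul_mul,
    star_mul_outer_mul, detk_eq_sum_principalMinor_s14, detk_eq_sum_principalMinor_s14]
  refine sum_principalMinor_diagonal_add_vecMulVec_le hA.eigenvalues_nonneg
    (hB.conjTranspose_mul_mul_same U) fun s hs => ?_
  have hcard : #sᶜ = d - k + 1 := by rw [card_compl, Fintype.card_fin]; omega
  have hproj := hvB.sum_diag_star_mul_mul_le hU hcard
  rwa [star_mul_outer_mul, star_eq_conjTranspose] at hproj

theorem detk_monotone_and_neg_detk_root_vector_k_monotone_general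
    {d : ℕ} (k : ℕ) (hkd : k ≤ d)
    (A B : Matrix (Fin d) (Fin d) ℝ) (hA : A.PosSemidef) (hB : B.PosSemidef)
    (v : Fin d → ℝ) (hvB : PrecK k (outer v) B) :
    detk k (A + outer v) ≤ detk k (A + B) ∧
      VectorKMonotone (d := d) k (fun C => -(detk k C ^ ((1:ℝ) / k))) := by
  refine ⟨detk_add_outer_le hkd hA hB hvB, fun A' B' hA' hB' v' hv' => ?_⟩
  exact neg_le_neg <| Real.rpow_le_rpow (detk_nonneg k (hA'.add (outer_posSemidef v')))
    (detk_add_outer_le hkd hA' hB' hv') (by positivity)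

theorem detk_monotone_and_neg_detk_root_vector_k_monotone
    {d : ℕ} (k : ℕ) (hk1 : 1 ≤ k) (hkd : k ≤ d)
    (A B : Matrix (Fin d) (Fin d) ℝ) (hA : A.PosSemidef) (hB : B.PosSemidef)
    (v : Fin d → ℝ) (hvB : PrecK k (outer v) B) :
    detk k (A + outer v) ≤ detk k (A + B) ∧
      VectorKMonotone (d := d) k (fun C => -(detk k C ^ ((1:ℝ) / k))) :=
  detk_monotone_and_neg_detk_root_vector_k_monotone_general k hkd A B hA hB v hvB
end
end
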